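/- arXiv:1808.01025 — 2 statements merged into one kernel-verified Lean document; each statement's English description precedes it below -/
import Mathlib

section
/- Let i and j be distinct new nodes of R_q(G) with neighbor sets {s,t} and {u,v} respectively (st and uv edges of G). Then r̃_{ij} = 1 + (r_{su} + r_{tu} + r_{sv} + r_{tv} - r_{uv} - r_{st})/(2(q+2)). -/
open scoped Classical

/-- The `q`-triangulation graph `R_q(G)`: for each edge `e` of `G` we add `q` new
nodes (indexed by `G.edgeSet × Fin q`), each adjacent exactly to the two endpoints of `e`. -/
noncomputable def qTriangulation {V : Type} (G : SimpleGraph V) (q : ℕ) :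
    SimpleGraph (V ⊕ (G.edgeSet × Fin q)) where
  Adj x y :=
    match x, y with
    | Sum.inl a, Sum.inl b => G.Adj a b
    | Sum.inl a, Sum.inr p => a ∈ (p.1 : Sym2 V)
    | Sum.inr p, Sum.inl b => b ∈ (p.1 : Sym2 V)
    | Sum.inr _, Sum.inr _ => False
  symm := by
    constructor
    rintro (a | p) (b | p') h
    · exact h.symm
    · exact h
    · exact h
    · exact h.elim
  loopless := by
    constructor
    rintro (a | p) h
    · exact G.irrefl h
    · exact h

/-- The Laplacian of a finite simple graph over `ℝ` is Hermitian. -/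
lemma lap_isHermitian {V : Type} [Fintype V] (G : SimpleGraph V) :
    (G.lapMatrix ℝ).IsHermitian := by
  have h := G.isSymm_lapMatrix (R := ℝ)
  simpa [Matrix.IsHermitian, Matrix.conjTranspose_eq_transpose_of_trivial, Matrix.IsSymm] using h

/-- The Moore–Penrose pseudoinverse `L⁺` of the graph Laplacian, obtained from the spectral
theorem by inverting the nonzero eigenvalues (in `ℝ`, `0⁻¹ = 0`). -/
noncomputable def lapPinv {V : Type} [Fintype V] [DecidableEq V] (G : SimpleGraph V) :
    Matrix V V ℝ :=
  ((lap_isHermitian G).eigenvectorUnitary : Matrix V V ℝ) *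
    Matrix.diagonal (fun i => ((lap_isHermitian G).eigenvalues i)⁻¹) *
    (star ((lap_isHermitian G).eigenvectorUnitary : Matrix V V ℝ))

/-- Resistance distance `r_{ij} = (e_i - e_j)ᵀ L⁺ (e_i - e_j)`. -/
noncomputable def resistance {V : Type} [Fintype V] [DecidableEq V] (G : SimpleGraph V)
    (i j : V) : ℝ :=
  dotProduct ((Pi.single i 1 - Pi.single j 1 : V → ℝ))
    (Matrix.mulVec (lapPinv G) (Pi.single i 1 - Pi.single j 1 : V → ℝ))

section ResistanceAux

open Matrix

variable {V : Type} [Fintype V] [DecidableEq V]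

lemma lap_spectral' (G : SimpleGraph V) :
    G.lapMatrix ℝ = ((lap_isHermitian G).eigenvectorUnitary : Matrix V V ℝ) *
      Matrix.diagonal ((lap_isHermitian G).eigenvalues) *
      (star ((lap_isHermitian G).eigenvectorUnitary : Matrix V V ℝ)) := by
  have h := (lap_isHermitian G).spectral_theorem
  simp only [RCLike.ofReal_real_eq_id, Function.comp_id, Function.id_comp, Unitary.conjStarAlgAut_apply] at h
  convert h using 2

lemma lap_mul_pinv_mul (G : SimpleGraph V) :
    G.lapMatrix ℝ * lapPinv G * G.lapMatrix ℝ = G.lapMatrix ℝ := by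
  set hL := lap_isHermitian G
  set U : Matrix V V ℝ := (hL.eigenvectorUnitary : Matrix V V ℝ) with hU
  have h1 : star U * U = 1 := Unitary.coe_star_mul_self hL.eigenvectorUnitary
  have hdiag : ∀ g h : V → ℝ, Matrix.diagonal g * Matrix.diagonal h
      = Matrix.diagonal (fun i => g i * h i) := fun g h => Matrix.diagonal_mul_diagonal g h
  rw [lap_spectral', lapPinv]
  calc U * Matrix.diagonal hL.eigenvalues * star U *
        (U * Matrix.diagonal (fun i => (hL.eigenvalues i)⁻¹) * star U) *
        (U * Matrix.diagonal hL.eigenvalues * star U)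
      = U * (Matrix.diagonal hL.eigenvalues * (star U * U) *
          Matrix.diagonal (fun i => (hL.eigenvalues i)⁻¹) * (star U * U) *
          Matrix.diagonal hL.eigenvalues) * star U := by
        simp only [Matrix.mul_assoc]
    _ = U * Matrix.diagonal hL.eigenvalues * star U := by
        rw [h1]
        simp only [Matrix.mul_one, hdiag]
        congr 2
        ext i
        rcases eq_or_ne (hL.eigenvalues i) 0 with h | h
        · simp [h]
        · field_simp

/-- If `L x = e_i - e_j` then the resistance equals `x i - x j`. -/
lemma resistance_eq_of_sol (G : SimpleGraph V) (i j : V) (x : V → ℝ)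
    (hx : G.lapMatrix ℝ *ᵥ x = Pi.single i 1 - Pi.single j 1) :
    resistance G i j = x i - x j := by
  have hsymm : (G.lapMatrix ℝ)ᵀ = G.lapMatrix ℝ := G.isSymm_lapMatrix (R := ℝ)
  have hmove : ∀ y : V → ℝ, (G.lapMatrix ℝ *ᵥ x) ⬝ᵥ y = x ⬝ᵥ (G.lapMatrix ℝ *ᵥ y) := by
    intro y
    calc (G.lapMatrix ℝ *ᵥ x) ⬝ᵥ y = y ⬝ᵥ (G.lapMatrix ℝ *ᵥ x) := dotProduct_comm _ _
      _ = (y ᵥ* G.lapMatrix ℝ) ⬝ᵥ x := Matrix.dotProduct_mulVec _ _ _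
      _ = x ⬝ᵥ (y ᵥ* G.lapMatrix ℝ) := dotProduct_comm _ _
      _ = x ⬝ᵥ (G.lapMatrix ℝ *ᵥ y) := by
          rw [show y ᵥ* G.lapMatrix ℝ = G.lapMatrix ℝ *ᵥ y by
            conv_lhs => rw [← hsymm, Matrix.vecMul_transpose]]
  have key : resistance G i j = x ⬝ᵥ (G.lapMatrix ℝ * lapPinv G * G.lapMatrix ℝ) *ᵥ x := by
    rw [resistance, ← hx, hmove]
    rw [Matrix.mulVec_mulVec, Matrix.mulVec_mulVec]
  rw [key, lap_mul_pinv_mul, hx]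
  simp [dotProduct_sub, dotProduct_single]

/-- For connected `G` and mean-zero `b`, `L (L⁺ b) = b`. -/
lemma lap_mulVec_lapPinv (G : SimpleGraph V) (hG : G.Connected) (b : V → ℝ)
    (hb : ∑ a, b a = 0) :
    G.lapMatrix ℝ *ᵥ (lapPinv G *ᵥ b) = b := by
  set hL := lap_isHermitian G
  set U : Matrix V V ℝ := (hL.eigenvectorUnitary : Matrix V V ℝ) with hUdef
  have h1 : star U * U = 1 := Unitary.coe_star_mul_self hL.eigenvectorUnitary
  have h2 : U * star U = 1 := Unitary.coe_mul_star_self hL.eigenvectorUnitary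
  have hspec : G.lapMatrix ℝ = U * Matrix.diagonal hL.eigenvalues * star U := lap_spectral' G
  set c : V → ℝ := star U *ᵥ b with hc
  have hLLp : G.lapMatrix ℝ * lapPinv G
      = U * Matrix.diagonal (fun i => hL.eigenvalues i * (hL.eigenvalues i)⁻¹) * star U := by
    rw [hspec, lapPinv]
    calc U * Matrix.diagonal hL.eigenvalues * star U *
          (U * Matrix.diagonal (fun i => (hL.eigenvalues i)⁻¹) * star U)
        = U * (Matrix.diagonal hL.eigenvalues * (star U * U) *
            Matrix.diagonal (fun i => (hL.eigenvalues i)⁻¹)) * star U := by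
          simp only [Matrix.mul_assoc]
      _ = _ := by rw [h1, Matrix.mul_one, Matrix.diagonal_mul_diagonal]
  have hcol : ∀ i, hL.eigenvalues i = 0 → c i = 0 := by
    intro i hev
    set w : V → ℝ := fun a => U a i with hw
    have hLw : G.lapMatrix ℝ *ᵥ w = 0 := by
      ext a
      have : (G.lapMatrix ℝ *ᵥ w) a = (G.lapMatrix ℝ * U) a i := by
        simp [Matrix.mulVec, Matrix.mul_apply, dotProduct, hw]
      rw [this, hspec, Matrix.mul_assoc (U * Matrix.diagonal hL.eigenvalues) (star U) U, h1,
        Matrix.mul_one, Matrix.mul_diagonal, hev, mul_zero]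
      simp
    have hconst : ∀ p p' : V, w p = w p' := by
      intro p p'
      have := (G.lapMatrix_mulVec_eq_zero_iff_forall_reachable (x := w)).mp
        hLw
      exact this p p' (hG.preconnected p p')
    obtain ⟨a0⟩ := hG.nonempty
    have hci : c i = ∑ a, w a * b a := by
      simp [hc, Matrix.mulVec, dotProduct, hw, Matrix.star_apply, mul_comm]
    rw [hci]
    calc ∑ a, w a * b a = ∑ a, w a0 * b a :=
          Finset.sum_congr rfl fun a _ => by rw [hconst a a0]
      _ = w a0 * ∑ a, b a := by rw [Finset.mul_sum]
      _ = 0 := by rw [hb, mul_zero]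
  have hdiagc : Matrix.diagonal (fun i => hL.eigenvalues i * (hL.eigenvalues i)⁻¹) *ᵥ c = c := by
    ext i
    rw [Matrix.mulVec_diagonal]
    rcases eq_or_ne (hL.eigenvalues i) 0 with h | h
    · rw [hcol i h, mul_zero]
    · rw [mul_inv_cancel₀ h, one_mul]
  calc G.lapMatrix ℝ *ᵥ (lapPinv G *ᵥ b)
      = (G.lapMatrix ℝ * lapPinv G) *ᵥ b := by rw [Matrix.mulVec_mulVec]
    _ = U *ᵥ (Matrix.diagonal (fun i => hL.eigenvalues i * (hL.eigenvalues i)⁻¹) *ᵥ c) := by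
        rw [hLLp, hc, ← Matrix.mulVec_mulVec, ← Matrix.mulVec_mulVec]
    _ = U *ᵥ c := by rw [hdiagc]
    _ = b := by rw [hc, Matrix.mulVec_mulVec, h2, Matrix.one_mulVec]

lemma lap_mulVec_eq_sum (G : SimpleGraph V) (x : V → ℝ) (a : V) :
    (G.lapMatrix ℝ *ᵥ x) a = ∑ b : V, if G.Adj a b then x a - x b else 0 := by
  rw [SimpleGraph.lapMatrix_mulVec_apply]
  have h1 : ∑ u ∈ G.neighborFinset a, x u = ∑ b : V, if G.Adj a b then x b else 0 := by
    rw [← Finset.sum_filter]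
    congr 1
    ext b
    simp [SimpleGraph.mem_neighborFinset]
  rw [h1, G.degree_eq_sum_if_adj (R := ℝ), Finset.sum_mul, ← Finset.sum_sub_distrib]
  congr 1
  ext b
  split <;> ring

/-- Sum of `ψ` over the two endpoints of an unordered pair. -/
noncomputable def eSum (ψ : V → ℝ) : Sym2 V → ℝ :=
  Sym2.lift ⟨fun a b => ψ a + ψ b, fun _ _ => add_comm _ _⟩

@[simp] lemma eSum_mk (ψ : V → ℝ) (a b : V) : eSum ψ s(a, b) = ψ a + ψ b :=
  Sym2.lift_mk _ _ _

lemma sum_over_edges (G : SimpleGraph V) (ψ : V → ℝ) (a : V) :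
    ∑ g : G.edgeSet, (if a ∈ (g : Sym2 V) then 2 * ψ a - eSum ψ (g : Sym2 V) else 0)
      = ∑ b : V, if G.Adj a b then ψ a - ψ b else 0 := by
  rw [Finset.sum_set_coe (f := fun z => if a ∈ z then 2 * ψ a - eSum ψ z else 0)]
  rw [show G.edgeSet.toFinset = G.edgeFinset from rfl]
  rw [← Finset.sum_filter]
  have h2 : ∑ b : V, (if G.Adj a b then ψ a - ψ b else 0)
      = ∑ b ∈ G.neighborFinset a, (ψ a - ψ b) := by
    rw [← Finset.sum_filter]
    congr 1
    ext b
    simp [SimpleGraph.mem_neighborFinset]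
  rw [h2]
  refine Finset.sum_bij' (i := fun z hz => Sym2.Mem.other' (Finset.mem_filter.mp hz).2)
    (j := fun b _ => s(a, b)) ?hi ?hj ?left ?right ?val
  case hi =>
    intro z hz
    obtain ⟨hz1, hz2⟩ := Finset.mem_filter.mp hz
    rw [SimpleGraph.mem_neighborFinset, ← SimpleGraph.mem_edgeSet, Sym2.other_spec' hz2]
    exact SimpleGraph.mem_edgeFinset.mp hz1
  case hj =>
    intro b hb
    rw [SimpleGraph.mem_neighborFinset] at hb
    exact Finset.mem_filter.mpr ⟨SimpleGraph.mem_edgeFinset.mpr hb, Sym2.mem_mk_left a b⟩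
  case left =>
    intro z hz
    exact Sym2.other_spec' (Finset.mem_filter.mp hz).2
  case right =>
    intro b hb
    exact Sym2.congr_right.mp (Sym2.other_spec' _)
  case val =>
    intro z hz
    obtain ⟨hz1, hz2⟩ := Finset.mem_filter.mp hz
    have h := Sym2.other_spec' hz2
    conv_lhs => rw [← h]
    rw [eSum_mk]
    ring

end ResistanceAux

open Matrix in
/-- For distinct new nodes of `R_q(G)` attached to the edges `st` and `uv`
of `G`: `r̃_{ij} = 1 + (r_{su} + r_{tu} + r_{sv} + r_{tv} - r_{uv} - r_{st})/(2(q+2))`. -/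
theorem resistance_qTriangulation_new_new {V : Type} [Fintype V] [DecidableEq V]
    (G : SimpleGraph V) (hG : G.Connected) (q : ℕ) (hq : 0 < q)
    (e f : G.edgeSet) (k l : Fin q) (hne : (e, k) ≠ (f, l))
    (s t u v : V) (he : (e : Sym2 V) = s(s, t)) (hf : (f : Sym2 V) = s(u, v)) :
    resistance (qTriangulation G q) (Sum.inr (e, k)) (Sum.inr (f, l))
      = 1 + (resistance G s u + resistance G t u + resistance G s v + resistance G t v
          - resistance G u v - resistance G s t) / (2 * ((q : ℝ) + 2)) := by
  have hst : G.Adj s t := by rw [← SimpleGraph.mem_edgeSet, ← he]; exact e.2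
  have huv : G.Adj u v := by rw [← SimpleGraph.mem_edgeSet, ← hf]; exact f.2
  have hsts : s ≠ t := hst.ne
  have huvs : u ≠ v := huv.ne
  have hκ0 : (q : ℝ) + 2 ≠ 0 := by positivity
  set κ : ℝ := ((q : ℝ) + 2)⁻¹ with hκdef
  set b0 : V → ℝ := fun a => (if a = s then (1:ℝ) else 0) + (if a = t then 1 else 0)
      - (if a = u then 1 else 0) - (if a = v then 1 else 0) with hb0
  have hb0sum : ∑ a, b0 a = 0 := by
    simp [hb0, Finset.sum_add_distrib, Finset.sum_sub_distrib, Finset.sum_ite_eq']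
  set ψ : V → ℝ := lapPinv G *ᵥ b0 with hψdef
  have hψ : G.lapMatrix ℝ *ᵥ ψ = b0 := lap_mulVec_lapPinv G hG b0 hb0sum
  set x : V ⊕ (G.edgeSet × Fin q) → ℝ := Sum.elim (fun a => κ * ψ a)
    (fun p => κ * eSum ψ (p.1 : Sym2 V) / 2 + (if p = (e, k) then (1:ℝ)/2 else 0)
      - (if p = (f, l) then (1:ℝ)/2 else 0)) with hx
  have hLx : (qTriangulation G q).lapMatrix ℝ *ᵥ x
      = Pi.single (Sum.inr (e, k)) 1 - Pi.single (Sum.inr (f, l)) 1 := by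
    ext w
    rw [lap_mulVec_eq_sum]
    rcases w with a | ⟨g, m⟩
    · -- original vertex of G
      rw [Fintype.sum_sum_type]
      have hpart1 : ∑ b : V, (if (qTriangulation G q).Adj (Sum.inl a) (Sum.inl b)
            then x (Sum.inl a) - x (Sum.inl b) else 0) = κ * b0 a := by
        have h1 : ∀ b : V, (if (qTriangulation G q).Adj (Sum.inl a) (Sum.inl b)
            then x (Sum.inl a) - x (Sum.inl b) else 0)
            = κ * (if G.Adj a b then ψ a - ψ b else 0) := by
          intro b
          have hadj : ((qTriangulation G q).Adj (Sum.inl a) (Sum.inl b)) = G.Adj a b := rfl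
          simp only [hadj, hx, Sum.elim_inl]
          split <;> ring
        rw [Finset.sum_congr rfl (fun b _ => h1 b), ← Finset.mul_sum,
          ← lap_mulVec_eq_sum, hψ]
      have hpart2 : ∑ p : G.edgeSet × Fin q, (if (qTriangulation G q).Adj (Sum.inl a) (Sum.inr p)
            then x (Sum.inl a) - x (Sum.inr p) else 0)
          = (q : ℝ) * (κ/2) * b0 a
            - (if a ∈ (e : Sym2 V) then (1:ℝ)/2 else 0)
            + (if a ∈ (f : Sym2 V) then (1:ℝ)/2 else 0) := by
        have hsplit : ∀ p : G.edgeSet × Fin q,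
            (if (qTriangulation G q).Adj (Sum.inl a) (Sum.inr p)
              then x (Sum.inl a) - x (Sum.inr p) else 0)
            = (if a ∈ ((p.1 : G.edgeSet) : Sym2 V) then κ/2 * (2 * ψ a - eSum ψ (p.1 : Sym2 V)) else 0)
              - (if p = (e, k) then (if a ∈ (e : Sym2 V) then (1:ℝ)/2 else 0) else 0)
              + (if p = (f, l) then (if a ∈ (f : Sym2 V) then (1:ℝ)/2 else 0) else 0) := by
          intro p
          have hadj : ((qTriangulation G q).Adj (Sum.inl a) (Sum.inr p))
              = (a ∈ ((p.1 : G.edgeSet) : Sym2 V)) := rfl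
          simp only [hadj, hx, Sum.elim_inl, Sum.elim_inr]
          rcases eq_or_ne p (e, k) with h2 | h2
          · subst h2
            rw [if_pos rfl, if_pos rfl, if_neg hne, if_neg hne]
            split_ifs with h1 <;> ring
          · rcases eq_or_ne p (f, l) with h3 | h3
            · subst h3
              rw [if_neg h2, if_neg h2, if_pos rfl, if_pos rfl]
              split_ifs with h1 <;> ring
            · rw [if_neg h2, if_neg h2, if_neg h3, if_neg h3]
              split_ifs with h1 <;> ring
        rw [Finset.sum_congr rfl (fun p _ => hsplit p)]
        rw [Finset.sum_add_distrib, Finset.sum_sub_distrib]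
        have hA : ∑ p : G.edgeSet × Fin q,
            (if a ∈ ((p.1 : G.edgeSet) : Sym2 V) then κ/2 * (2 * ψ a - eSum ψ (p.1 : Sym2 V)) else 0)
            = (q : ℝ) * (κ/2) * b0 a := by
          rw [Fintype.sum_prod_type]
          have hinner : ∀ g : G.edgeSet, ∑ _m : Fin q,
              (if a ∈ (g : Sym2 V) then κ/2 * (2 * ψ a - eSum ψ (g : Sym2 V)) else 0)
              = (q : ℝ) * (if a ∈ (g : Sym2 V) then κ/2 * (2 * ψ a - eSum ψ (g : Sym2 V)) else 0) := by
            intro g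
            rw [Finset.sum_const, Finset.card_univ, Fintype.card_fin, nsmul_eq_mul]
          rw [Finset.sum_congr rfl (fun g _ => hinner g), ← Finset.mul_sum]
          have : ∑ g : G.edgeSet, (if a ∈ (g : Sym2 V) then κ/2 * (2 * ψ a - eSum ψ (g : Sym2 V)) else 0)
              = κ/2 * ∑ g : G.edgeSet, (if a ∈ (g : Sym2 V) then (2 * ψ a - eSum ψ (g : Sym2 V)) else 0) := by
            rw [Finset.mul_sum]
            exact Finset.sum_congr rfl fun g _ => by split <;> ring
          rw [this, sum_over_edges, ← lap_mulVec_eq_sum, hψ]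
          ring
        have hB : ∑ p : G.edgeSet × Fin q,
            (if p = (e, k) then (if a ∈ (e : Sym2 V) then (1:ℝ)/2 else 0) else 0)
            = (if a ∈ (e : Sym2 V) then (1:ℝ)/2 else 0) := by
          rw [Finset.sum_ite_eq' Finset.univ (e, k)
            (fun _ => (if a ∈ (e : Sym2 V) then (1:ℝ)/2 else 0))]
          simp
        have hC : ∑ p : G.edgeSet × Fin q,
            (if p = (f, l) then (if a ∈ (f : Sym2 V) then (1:ℝ)/2 else 0) else 0)
            = (if a ∈ (f : Sym2 V) then (1:ℝ)/2 else 0) := by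
          rw [Finset.sum_ite_eq' Finset.univ (f, l)
            (fun _ => (if a ∈ (f : Sym2 V) then (1:ℝ)/2 else 0))]
          simp
        rw [hA, hB, hC]
      rw [hpart1, hpart2]
      have hRHS : (Pi.single (Sum.inr (e, k)) 1 - Pi.single (Sum.inr (f, l)) 1 :
          (V ⊕ (G.edgeSet × Fin q)) → ℝ) (Sum.inl a) = 0 := by
        simp [Pi.single_apply]
      rw [hRHS]
      have hmem1 : (if a ∈ (e : Sym2 V) then (1:ℝ)/2 else 0)
          = ((if a = s then (1:ℝ) else 0) + (if a = t then 1 else 0))/2 := by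
        rw [he]
        simp only [Sym2.mem_iff]
        by_cases h1 : a = s
        · subst h1; rw [if_pos (Or.inl rfl), if_pos rfl, if_neg hsts]; norm_num
        · by_cases h2 : a = t
          · subst h2; rw [if_pos (Or.inr rfl), if_neg h1, if_pos rfl]; norm_num
          · rw [if_neg (by tauto), if_neg h1, if_neg h2]; norm_num
      have hmem2 : (if a ∈ (f : Sym2 V) then (1:ℝ)/2 else 0)
          = ((if a = u then (1:ℝ) else 0) + (if a = v then 1 else 0))/2 := by
        rw [hf]
        simp only [Sym2.mem_iff]
        by_cases h1 : a = u
        · subst h1; rw [if_pos (Or.inl rfl), if_pos rfl, if_neg huvs]; norm_num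
        · by_cases h2 : a = v
          · subst h2; rw [if_pos (Or.inr rfl), if_neg h1, if_pos rfl]; norm_num
          · rw [if_neg (by tauto), if_neg h1, if_neg h2]; norm_num
      rw [hmem1, hmem2, hb0]
      rw [hκdef]
      field_simp
      ring
    · -- new vertex (g, m)
      obtain ⟨c, d, hg⟩ : ∃ c d : V, (g : Sym2 V) = s(c, d) := by
        obtain ⟨⟨c, d⟩, h⟩ := Quot.exists_rep (g : Sym2 V)
        exact ⟨c, d, h.symm⟩
      have hcd : c ≠ d := by
        have hadj : G.Adj c d := by rw [← SimpleGraph.mem_edgeSet, ← hg]; exact g.2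
        exact hadj.ne
      rw [Fintype.sum_sum_type]
      have hzero : ∑ p : G.edgeSet × Fin q,
          (if (qTriangulation G q).Adj (Sum.inr (g, m)) (Sum.inr p)
            then x (Sum.inr (g, m)) - x (Sum.inr p) else 0) = 0 := by
        apply Finset.sum_eq_zero
        intro p _
        exact if_neg id
      have hV : ∑ a : V, (if (qTriangulation G q).Adj (Sum.inr (g, m)) (Sum.inl a)
            then x (Sum.inr (g, m)) - x (Sum.inl a) else 0)
          = (x (Sum.inr (g, m)) - x (Sum.inl c)) + (x (Sum.inr (g, m)) - x (Sum.inl d)) := by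
        have hsp : ∀ a : V, (if (qTriangulation G q).Adj (Sum.inr (g, m)) (Sum.inl a)
              then x (Sum.inr (g, m)) - x (Sum.inl a) else 0)
            = (if a = c then x (Sum.inr (g, m)) - x (Sum.inl a) else 0)
              + (if a = d then x (Sum.inr (g, m)) - x (Sum.inl a) else 0) := by
          intro a
          have hmem : (qTriangulation G q).Adj (Sum.inr (g, m)) (Sum.inl a) ↔ a = c ∨ a = d := by
            show a ∈ (g : Sym2 V) ↔ _
            rw [hg, Sym2.mem_iff]
          by_cases h1 : a = c
          · by_cases h2 : a = d
            · exact absurd (h1 ▸ h2) hcd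
            · rw [if_pos (hmem.mpr (Or.inl h1)), if_pos h1, if_neg h2, add_zero]
          · by_cases h2 : a = d
            · rw [if_pos (hmem.mpr (Or.inr h2)), if_neg h1, if_pos h2, zero_add]
            · rw [if_neg (fun hh => by rcases hmem.mp hh with h | h; exacts [h1 h, h2 h]),
                if_neg h1, if_neg h2, add_zero]
        rw [Finset.sum_congr rfl (fun a _ => hsp a), Finset.sum_add_distrib,
          Finset.sum_ite_eq' Finset.univ c, Finset.sum_ite_eq' Finset.univ d]
        simp
      rw [hV, hzero, add_zero]
      have hxw : x (Sum.inr (g, m)) = κ * (ψ c + ψ d) / 2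
          + (if (g, m) = (e, k) then (1:ℝ)/2 else 0)
          - (if (g, m) = (f, l) then (1:ℝ)/2 else 0) := by
        simp only [hx, Sum.elim_inr]
        have : ((((g, m) : G.edgeSet × Fin q).1 : G.edgeSet) : Sym2 V) = s(c, d) := hg
        rw [this, eSum_mk]
      have hRHS : (Pi.single (Sum.inr (e, k)) 1 - Pi.single (Sum.inr (f, l)) 1 :
          (V ⊕ (G.edgeSet × Fin q)) → ℝ) (Sum.inr (g, m))
          = (if (g, m) = (e, k) then (1:ℝ) else 0) - (if (g, m) = (f, l) then (1:ℝ) else 0) := by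
        simp [Pi.single_apply]
      rw [hRHS, hxw]
      simp only [hx, Sum.elim_inl]
      split_ifs <;> ring
  rw [resistance_eq_of_sol (qTriangulation G q) _ _ x hLx]
  have hx_i : x (Sum.inr (e, k)) = κ * (ψ s + ψ t) / 2 + 1/2 := by
    simp only [hx, Sum.elim_inr]
    rw [if_true, if_neg hne]
    have : ((((e, k) : G.edgeSet × Fin q).1 : G.edgeSet) : Sym2 V) = s(s, t) := he
    rw [this, eSum_mk]
    ring
  have hx_j : x (Sum.inr (f, l)) = κ * (ψ u + ψ v) / 2 - 1/2 := by
    simp only [hx, Sum.elim_inr]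
    rw [if_neg (show ((f, l) : G.edgeSet × Fin q) ≠ (e, k) from Ne.symm hne), if_true]
    have : ((((f, l) : G.edgeSet × Fin q).1 : G.edgeSet) : Sym2 V) = s(u, v) := hf
    rw [this, eSum_mk]
    ring
  rw [hx_i, hx_j]
  have hψa : ∀ a : V, ψ a = lapPinv G a s + lapPinv G a t - lapPinv G a u - lapPinv G a v := by
    intro a
    simp [hψdef, hb0, Matrix.mulVec, dotProduct, mul_add, mul_sub, mul_ite, mul_one,
      mul_zero, Finset.sum_add_distrib, Finset.sum_sub_distrib, Finset.sum_ite_eq']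
  have hres : ∀ p r : V, resistance G p r
      = lapPinv G p p + lapPinv G r r - lapPinv G p r - lapPinv G r p := by
    intro p r
    rw [resistance, Matrix.mulVec_sub]
    simp [Matrix.mulVec_single, sub_dotProduct, dotProduct_sub,
      single_dotProduct]
    ring
  rw [hres s u, hres t u, hres s v, hres t v, hres u v, hres s t,
    hψa s, hψa t, hψa u, hψa v, hκdef]
  field_simp
  ring
end

section
/- If G is bipartite with bipartition-sign eigenvector v_n of P for eigenvalue −1 (entries √(d_i/2m) on one side and −√(d_i/2m) on the other), then the vector (v_n, 0) (zero on all new nodes) is an eigenvector of the normalized adjacency matrix P̃ of R_q(G) with eigenvalue −1/(q+1). -/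
open scoped Classical

/-- The normalized adjacency matrix `P = D^{-1/2} A D^{-1/2}` of a graph. -/
noncomputable def normAdj {V : Type} [Fintype V] (G : SimpleGraph V) : Matrix V V ℝ :=
  Matrix.of fun i j => (G.adjMatrix ℝ) i j / Real.sqrt ((G.degree i : ℝ) * (G.degree j : ℝ))

section Aux

variable {V : Type} [Fintype V]

lemma qTri_adj_ll (G : SimpleGraph V) (q : ℕ) (a b : V) :
    (qTriangulation G q).Adj (Sum.inl a) (Sum.inl b) ↔ G.Adj a b := Iff.rfl

lemma qTri_adj_lr (G : SimpleGraph V) (q : ℕ) (a : V) (p : G.edgeSet × Fin q) :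
    (qTriangulation G q).Adj (Sum.inl a) (Sum.inr p) ↔ a ∈ (p.1 : Sym2 V) := Iff.rfl

lemma qTri_adj_rl (G : SimpleGraph V) (q : ℕ) (b : V) (p : G.edgeSet × Fin q) :
    (qTriangulation G q).Adj (Sum.inr p) (Sum.inl b) ↔ b ∈ (p.1 : Sym2 V) := Iff.rfl

lemma qTri_adj_rr (G : SimpleGraph V) (q : ℕ) (p p' : G.edgeSet × Fin q) :
    ¬ (qTriangulation G q).Adj (Sum.inr p) (Sum.inr p') := fun h => h

lemma qTri_degree_inl (G : SimpleGraph V) (q : ℕ) (a : V) :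
    (qTriangulation G q).degree (Sum.inl a) = (q + 1) * G.degree a := by
  classical
  have h1 : (qTriangulation G q).degree (Sum.inl a)
      = ∑ x : V ⊕ (G.edgeSet × Fin q),
        if (qTriangulation G q).Adj (Sum.inl a) x then 1 else 0 := by
    rw [← Finset.card_filter, ← SimpleGraph.neighborFinset_eq_filter]; rfl
  rw [h1, Fintype.sum_sum_type]
  have h2 : (∑ b : V, if (qTriangulation G q).Adj (Sum.inl a) (Sum.inl b) then 1 else 0)
      = G.degree a := by
    rw [show G.degree a = (Finset.univ.filter (G.Adj a)).card by
      rw [← SimpleGraph.neighborFinset_eq_filter]; rfl, Finset.card_filter]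
    exact Finset.sum_congr rfl (fun b _ => by simp [qTri_adj_ll])
  have h3 : (∑ p : G.edgeSet × Fin q,
      if (qTriangulation G q).Adj (Sum.inl a) (Sum.inr p) then 1 else 0)
      = q * G.degree a := by
    rw [Fintype.sum_prod_type]
    have hstep : ∀ e : G.edgeSet, (∑ _k : Fin q,
        if (qTriangulation G q).Adj (Sum.inl a) (Sum.inr (e, _k)) then 1 else 0)
        = q * (if a ∈ (e : Sym2 V) then 1 else 0) := by
      intro e
      have h : ∀ k : Fin q, ((qTriangulation G q).Adj (Sum.inl a) (Sum.inr (e, k))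
          ↔ a ∈ (e : Sym2 V)) := fun k => Iff.rfl
      simp [h, Finset.sum_const, mul_comm]
    rw [Finset.sum_congr rfl (fun e _ => hstep e), ← Finset.mul_sum]
    congr 1
    have h4 : (∑ e : G.edgeSet, if a ∈ (e : Sym2 V) then 1 else 0)
        = ∑ e ∈ G.edgeFinset, if a ∈ e then 1 else 0 := by
      rw [Finset.sum_subtype G.edgeFinset (fun x => SimpleGraph.mem_edgeFinset)
        (fun e => if a ∈ e then 1 else 0)]
    rw [h4, ← Finset.card_filter, ← SimpleGraph.incidenceFinset_eq_filter,
      SimpleGraph.card_incidenceFinset_eq_degree]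
  rw [h2, h3]; ring

lemma qTri_degree_inr (G : SimpleGraph V) (q : ℕ) (p : G.edgeSet × Fin q) :
    (qTriangulation G q).degree (Sum.inr p) = 2 := by
  classical
  obtain ⟨⟨e, he⟩, k⟩ := p
  induction e using Sym2.ind with
  | _ u u' =>
    have hadj : G.Adj u u' := (SimpleGraph.mem_edgeSet G).1 he
    have h1 : (qTriangulation G q).degree (Sum.inr (⟨s(u,u'), he⟩, k))
        = ∑ x : V ⊕ (G.edgeSet × Fin q),
          if (qTriangulation G q).Adj (Sum.inr (⟨s(u,u'), he⟩, k)) x then 1 else 0 := by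
      rw [← Finset.card_filter, ← SimpleGraph.neighborFinset_eq_filter]; rfl
    rw [h1, Fintype.sum_sum_type]
    have h2 : (∑ p' : G.edgeSet × Fin q, if (qTriangulation G q).Adj
        (Sum.inr (⟨s(u,u'), he⟩, k)) (Sum.inr p') then 1 else 0) = 0 := by
      simp [qTri_adj_rr]
    have h3 : (∑ b : V, if (qTriangulation G q).Adj
        (Sum.inr (⟨s(u,u'), he⟩, k)) (Sum.inl b) then 1 else 0) = 2 := by
      have h : ∀ b : V, ((qTriangulation G q).Adj (Sum.inr (⟨s(u,u'), he⟩, k)) (Sum.inl b)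
          ↔ b = u ∨ b = u') := fun b => Sym2.mem_iff
      simp only [h]
      rw [← Finset.card_filter]
      have hf : Finset.univ.filter (fun b => b = u ∨ b = u') = {u, u'} := by
        ext b; simp
      rw [hf, Finset.card_pair hadj.ne]
    rw [h2, h3]

end Aux

theorem qTriangulation_bipartite_eigenvector {V : Type} [Fintype V]
    (G : SimpleGraph V) (hG : G.Connected) (q : ℕ) (hq : 0 < q)
    (s : Set V) (hbip : ∀ a b : V, G.Adj a b → (a ∈ s ↔ b ∉ s))
    (m : ℕ) (hm : G.edgeFinset.card = m)
    (v : V → ℝ)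
    (hv : ∀ i : V, v i = if i ∈ s then Real.sqrt ((G.degree i : ℝ) / (2 * (m : ℝ)))
      else -Real.sqrt ((G.degree i : ℝ) / (2 * (m : ℝ))))
    (w : (V ⊕ (G.edgeSet × Fin q)) → ℝ)
    (hw1 : ∀ a : V, w (Sum.inl a) = v a)
    (hw2 : ∀ p : G.edgeSet × Fin q, w (Sum.inr p) = 0) :
    Matrix.mulVec (normAdj (qTriangulation G q)) w = (-(1 / ((q : ℝ) + 1))) • w := by
  classical
  set H := qTriangulation G q with hH
  set ε : V → ℝ := fun i => if i ∈ s then 1 else -1 with hε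
  have hv' : ∀ i, v i = ε i * (Real.sqrt (G.degree i) / Real.sqrt (2 * m)) := by
    intro i
    rw [hv i, Real.sqrt_div (by positivity) (2 * (m:ℝ))]
    by_cases hi : i ∈ s <;> simp [hε, hi] <;> ring
  have hεadj : ∀ a b : V, G.Adj a b → ε b = -ε a := by
    intro a b hab
    have h := hbip a b hab
    by_cases ha : a ∈ s
    · have hb : b ∉ s := h.1 ha
      simp [hε, ha, hb]
    · have hb : b ∈ s := by
        by_contra hb
        exact ha (h.2 hb)
      simp [hε, ha, hb]
  have hmpos : ∀ {a b : V}, G.Adj a b → 0 < m := by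
    intro a b h
    rw [← hm]
    exact Finset.card_pos.2 ⟨s(a,b), (SimpleGraph.mem_edgeFinset).2
      ((SimpleGraph.mem_edgeSet G).2 h)⟩
  have hdegl : ∀ a : V, ((H.degree (Sum.inl a) : ℝ)) = ((q:ℝ)+1) * (G.degree a : ℝ) := by
    intro a
    rw [hH, qTri_degree_inl]
    push_cast; ring
  have hdegr : ∀ p : G.edgeSet × Fin q, ((H.degree (Sum.inr p) : ℝ)) = 2 := by
    intro p
    rw [hH, qTri_degree_inr]
    norm_num
  have hmulvec : ∀ x, (normAdj H).mulVec w x = ∑ y, normAdj H x y * w y := fun x => by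
    simp [Matrix.mulVec, dotProduct]
  funext x
  have hrhs : ((-(1 / ((q : ℝ) + 1))) • w) x = (-(1 / ((q : ℝ) + 1))) * w x := rfl
  rw [hrhs]
  cases x with
  | inl a =>
    rw [hmulvec, Fintype.sum_sum_type]
    have hzero : (∑ p : G.edgeSet × Fin q, normAdj H (Sum.inl a) (Sum.inr p) * w (Sum.inr p)) = 0 := by
      apply Finset.sum_eq_zero
      intro p _
      rw [hw2]; ring
    rw [hzero, add_zero, hw1]
    by_cases hda : G.degree a = 0
    · have hva : v a = 0 := by
        rw [hv' a, hda]
        simp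
      have hall : ∀ b : V, normAdj H (Sum.inl a) (Sum.inl b) * w (Sum.inl b) = 0 := by
        intro b
        have hnadj : ¬ G.Adj a b := by
          intro h
          have : 0 < G.degree a := (SimpleGraph.degree_pos_iff_exists_adj G a).2 ⟨b, h⟩
          omega
        have : ¬ H.Adj (Sum.inl a) (Sum.inl b) := fun h => hnadj ((qTri_adj_ll G q a b).1 h)
        simp [normAdj, this]
      rw [Finset.sum_eq_zero (fun b _ => hall b), hva, mul_zero]
    · have hda' : 0 < G.degree a := Nat.pos_of_ne_zero hda
      obtain ⟨b0, hb0⟩ := (SimpleGraph.degree_pos_iff_exists_adj G a).1 hda'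
      have hm0 : 0 < m := hmpos hb0
      have hdaR : (0:ℝ) < (G.degree a : ℝ) := by exact_mod_cast hda'
      have hsa : Real.sqrt (G.degree a) ≠ 0 := (Real.sqrt_pos.2 hdaR).ne'
      have hs2m : Real.sqrt (2 * m) ≠ 0 := by
        have : (0:ℝ) < 2 * m := by positivity
        exact (Real.sqrt_pos.2 this).ne'
      have hq1 : ((q:ℝ) + 1) ≠ 0 := by positivity
      have hterm : ∀ b : V, normAdj H (Sum.inl a) (Sum.inl b) * w (Sum.inl b)
          = if G.Adj a b then
              -(ε a) / (((q:ℝ)+1) * Real.sqrt (2*m) * Real.sqrt (G.degree a)) else 0 := by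
        intro b
        by_cases hab : G.Adj a b
        · have hdb : 0 < G.degree b := (SimpleGraph.degree_pos_iff_exists_adj G b).2 ⟨a, hab.symm⟩
          have hdbR : (0:ℝ) < (G.degree b : ℝ) := by exact_mod_cast hdb
          have hsb : Real.sqrt (G.degree b) ≠ 0 := (Real.sqrt_pos.2 hdbR).ne'
          have hAdj : H.Adj (Sum.inl a) (Sum.inl b) := (qTri_adj_ll G q a b).2 hab
          have hentry : normAdj H (Sum.inl a) (Sum.inl b)
              = 1 / Real.sqrt (((H.degree (Sum.inl a) : ℝ)) * ((H.degree (Sum.inl b) : ℝ))) := by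
            simp [normAdj, hAdj]
          rw [if_pos hab, hentry, hdegl, hdegl, hw1, hv' b, hεadj a b hab]
          have hsqrt : Real.sqrt ((((q:ℝ)+1) * (G.degree a : ℝ)) * (((q:ℝ)+1) * (G.degree b : ℝ)))
              = ((q:ℝ)+1) * (Real.sqrt (G.degree a) * Real.sqrt (G.degree b)) := by
            rw [show (((q:ℝ)+1) * (G.degree a : ℝ)) * (((q:ℝ)+1) * (G.degree b : ℝ))
                = (((q:ℝ)+1) * ((q:ℝ)+1)) * ((G.degree a : ℝ) * (G.degree b : ℝ)) by ring,
              Real.sqrt_mul (by positivity), Real.sqrt_mul_self (by positivity),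
              Real.sqrt_mul (by positivity)]
          rw [hsqrt]
          field_simp
        · have hnAdj : ¬ H.Adj (Sum.inl a) (Sum.inl b) := fun h => hab ((qTri_adj_ll G q a b).1 h)
          rw [if_neg hab]
          simp [normAdj, hnAdj]
      rw [Finset.sum_congr rfl (fun b _ => hterm b), ← Finset.sum_filter,
        Finset.sum_const, ← SimpleGraph.neighborFinset_eq_filter,
        SimpleGraph.card_neighborFinset_eq_degree, nsmul_eq_mul, hv' a]
      field_simp
      linear_combination (ε a) *
        (Real.mul_self_sqrt hdaR.le)
  | inr p =>
    obtain ⟨⟨e, he⟩, k⟩ := p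
    induction e using Sym2.ind with
    | _ u u' =>
      have hadj : G.Adj u u' := (SimpleGraph.mem_edgeSet G).1 he
      have hm0 : 0 < m := hmpos hadj
      have hs2m : Real.sqrt (2 * m) ≠ 0 := by
        have : (0:ℝ) < 2 * m := by positivity
        exact (Real.sqrt_pos.2 this).ne'
      set P : G.edgeSet × Fin q := (⟨s(u,u'), he⟩, k) with hP
      rw [hmulvec, Fintype.sum_sum_type, hw2]
      have hzero : (∑ p' : G.edgeSet × Fin q, normAdj H (Sum.inr P) (Sum.inr p') * w (Sum.inr p')) = 0 := by
        apply Finset.sum_eq_zero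
        intro p' _
        rw [hw2]; ring
      rw [hzero, add_zero, mul_zero]
      have hterm : ∀ b : V, normAdj H (Sum.inr P) (Sum.inl b) * w (Sum.inl b)
          = if b = u ∨ b = u' then
              ε b * (1 / (Real.sqrt 2 * Real.sqrt ((q:ℝ)+1) * Real.sqrt (2*m))) else 0 := by
        intro b
        by_cases hb : b = u ∨ b = u'
        · have hdb : 0 < G.degree b := by
            rcases hb with rfl | rfl
            · exact (SimpleGraph.degree_pos_iff_exists_adj G b).2 ⟨u', hadj⟩
            · exact (SimpleGraph.degree_pos_iff_exists_adj G b).2 ⟨u, hadj.symm⟩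
          have hdbR : (0:ℝ) < (G.degree b : ℝ) := by exact_mod_cast hdb
          have hsb : Real.sqrt (G.degree b) ≠ 0 := (Real.sqrt_pos.2 hdbR).ne'
          have hAdj : H.Adj (Sum.inr P) (Sum.inl b) := by
            rw [hH, qTri_adj_rl]
            exact Sym2.mem_iff.2 hb
          have hentry : normAdj H (Sum.inr P) (Sum.inl b)
              = 1 / Real.sqrt (((H.degree (Sum.inr P) : ℝ)) * ((H.degree (Sum.inl b) : ℝ))) := by
            simp [normAdj, hAdj]
          rw [if_pos hb, hentry, hdegr, hdegl, hw1, hv' b]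
          have hsqrt : Real.sqrt ((2:ℝ) * (((q:ℝ)+1) * (G.degree b : ℝ)))
              = Real.sqrt 2 * (Real.sqrt ((q:ℝ)+1) * Real.sqrt (G.degree b)) := by
            rw [Real.sqrt_mul (by norm_num), Real.sqrt_mul (by positivity)]
          rw [hsqrt]
          have hsq2 : Real.sqrt 2 ≠ 0 := by
            have : (0:ℝ) < 2 := by norm_num
            exact (Real.sqrt_pos.2 this).ne'
          have hsq1 : Real.sqrt ((q:ℝ)+1) ≠ 0 := by
            have : (0:ℝ) < (q:ℝ)+1 := by positivity
            exact (Real.sqrt_pos.2 this).ne'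
          field_simp
        · have hnAdj : ¬ H.Adj (Sum.inr P) (Sum.inl b) := by
            rw [hH, qTri_adj_rl]
            intro h
            exact hb (Sym2.mem_iff.1 h)
          rw [if_neg hb]
          simp [normAdj, hnAdj]
      rw [Finset.sum_congr rfl (fun b _ => hterm b), ← Finset.sum_filter]
      have hf : Finset.univ.filter (fun b => b = u ∨ b = u') = {u, u'} := by
        ext b; simp
      rw [hf, Finset.sum_pair hadj.ne, hεadj u u' hadj]
      ring
end
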